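/- Let w₁,...,w_k and z₁,...,z_N be unit vectors in ℝ^d with labels y : {1,...,N} → {1,...,k}, each label occurring at least once, and suppose 2 ≤ k ≤ d+1, d ≥ 2. Then min_i (⟪w_{y_i}, z_i⟫ − max_{j≠y_i} ⟪w_j, z_i⟫) ≤ k/(k−1), and equality holds iff ⟪w_i, w_j⟫ = −1/(k−1) for all i ≠ j and z_i = w_{y_i} for all i. -/

import Mathlib

/-!
Write `S = ∑ j, w j`. The largest competing score `max_{j ≠ c} ⟪w j, z⟫` is at least the average
over the other `k - 1` classes, so the margin of a unit vector `z` with label `c` is at most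
`⟪k • w c - S, z⟫ / (k - 1) ≤ ‖k • w c - S‖ / (k - 1)`. For unit `w c` one has
`∑ c, ‖k • w c - S‖² = k³ - k ‖S‖² ≤ k³`, so some class has `‖k • w c - S‖ ≤ k`; since every class
labels a sample, the minimal margin is at most `k / (k - 1)`. In the equality case every
`‖k • w c - S‖` is at least `k`, which forces `S = 0`; then `⟪w c, z⟫ ≥ 1` gives `z = w c`, and the
maximum equals the average `-1 / (k - 1)` of the competing scores only if all of them are equal.
-/

open scoped RealInnerProductSpace
open Finset

section Margin

variable {ι E : Type*} [Fintype ι] [NormedAddCommGroup E] [InnerProductSpace ℝ E]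

lemma sum_norm_smul_card_sub_sum_sq {w : ι → E} (hw : ∀ j, ‖w j‖ = 1) :
    ∑ c, ‖(Fintype.card ι : ℝ) • w c - ∑ j, w j‖ ^ 2
      = (Fintype.card ι : ℝ) ^ 3 - Fintype.card ι * ‖∑ j, w j‖ ^ 2 := by
  have hterm : ∀ c, ‖(Fintype.card ι : ℝ) • w c - ∑ j, w j‖ ^ 2
      = (Fintype.card ι : ℝ) ^ 2 - 2 * Fintype.card ι * ⟪w c, ∑ j, w j⟫ + ‖∑ j, w j‖ ^ 2 := by
    intro c
    rw [norm_sub_sq_real, norm_smul, real_inner_smul_left, hw c, Real.norm_natCast]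
    ring
  simp only [hterm, sum_add_distrib, sum_sub_distrib, ← mul_sum, ← sum_inner,
    real_inner_self_eq_norm_sq, sum_const, card_univ, nsmul_eq_mul]
  ring

lemma exists_norm_smul_card_sub_sum_le [Nonempty ι] {w : ι → E} (hw : ∀ j, ‖w j‖ = 1) :
    ∃ c, ‖(Fintype.card ι : ℝ) • w c - ∑ j, w j‖ ≤ Fintype.card ι := by
  obtain ⟨c, -, hc⟩ := exists_le_of_sum_le (g := fun _ => (Fintype.card ι : ℝ) ^ 2)
    univ_nonempty (by
      rw [sum_norm_smul_card_sub_sum_sq hw, sum_const, card_univ, nsmul_eq_mul]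
      nlinarith [sq_nonneg ‖∑ j, w j‖, (Fintype.card ι).cast_nonneg (α := ℝ)])
  exact ⟨c, abs_le_of_sq_le_sq' hc (Nat.cast_nonneg _) |>.2⟩

lemma sum_eq_zero_of_card_le_norm_smul_card_sub_sum [Nonempty ι] {w : ι → E}
    (hw : ∀ j, ‖w j‖ = 1)
    (h : ∀ c, (Fintype.card ι : ℝ) ≤ ‖(Fintype.card ι : ℝ) • w c - ∑ j, w j‖) :
    ∑ j, w j = 0 := by
  have hsum := sum_le_sum fun c (_ : c ∈ univ) =>
    pow_le_pow_left₀ (Nat.cast_nonneg (Fintype.card ι)) (h c) 2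
  rw [sum_norm_smul_card_sub_sum_sq hw, sum_const, card_univ, nsmul_eq_mul] at hsum
  have hcard : (0 : ℝ) < Fintype.card ι := Nat.cast_pos.mpr Fintype.card_pos
  rw [← norm_eq_zero, ← sq_eq_zero_iff]
  nlinarith [sq_nonneg ‖∑ j, w j‖]

variable [DecidableEq ι]

noncomputable def sampleMargin (w : ι → E) (c : ι) (h : (univ.erase c).Nonempty) (z : E) : ℝ :=
  ⟪w c, z⟫ - (univ.erase c).sup' h fun j => ⟪w j, z⟫

lemma cast_card_erase_univ (c : ι) :
    ((univ.erase c).card : ℝ) = Fintype.card ι - 1 := by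
  rw [card_erase_of_mem (mem_univ c), Nat.cast_pred (card_pos.mpr ⟨c, mem_univ c⟩), card_univ]

lemma sub_one_pos_of_nonempty_erase {c : ι} (h : (univ.erase c).Nonempty) :
    (0 : ℝ) < Fintype.card ι - 1 := by
  rw [← cast_card_erase_univ c]
  exact_mod_cast h.card_pos

lemma inner_smul_card_sub_sum (w : ι → E) (c : ι) (z : E) :
    ⟪(Fintype.card ι : ℝ) • w c - ∑ j, w j, z⟫
      = (Fintype.card ι - 1) * ⟪w c, z⟫ - ∑ j ∈ univ.erase c, ⟪w j, z⟫ := by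
  rw [inner_sub_left, real_inner_smul_left, sum_inner, ← add_sum_erase _ _ (mem_univ c)]
  ring

lemma sampleMargin_le_inner_smul_card_sub_sum (w : ι → E) {c : ι} (h : (univ.erase c).Nonempty)
    (z : E) :
    sampleMargin w c h z ≤ ⟪(Fintype.card ι : ℝ) • w c - ∑ j, w j, z⟫ / (Fintype.card ι - 1) := by
  have hsum : ∑ j ∈ univ.erase c, ⟪w j, z⟫
      ≤ (Fintype.card ι - 1) * (univ.erase c).sup' h fun j => ⟪w j, z⟫ := by
    rw [← cast_card_erase_univ c, ← nsmul_eq_mul]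
    exact sum_le_card_nsmul _ _ _ fun j hj => le_sup' (fun j => ⟪w j, z⟫) hj
  rw [inner_smul_card_sub_sum, le_div_iff₀ (sub_one_pos_of_nonempty_erase h), sampleMargin]
  linarith

lemma sampleMargin_le_norm_smul_card_sub_sum (w : ι → E) {c : ι} (h : (univ.erase c).Nonempty)
    {z : E} (hz : ‖z‖ = 1) :
    sampleMargin w c h z ≤ ‖(Fintype.card ι : ℝ) • w c - ∑ j, w j‖ / (Fintype.card ι - 1) := by
  refine (sampleMargin_le_inner_smul_card_sub_sum w h z).trans ?_
  gcongr
  · exact (sub_one_pos_of_nonempty_erase h).le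
  · simpa [hz] using real_inner_le_norm ((Fintype.card ι : ℝ) • w c - ∑ j, w j) z

lemma eq_of_le_sampleMargin_of_sum_eq_zero {w : ι → E} {c : ι} {h : (univ.erase c).Nonempty}
    {z : E}
    (hwc : ‖w c‖ = 1) (hz : ‖z‖ = 1) (hS : ∑ j, w j = 0)
    (hm : (Fintype.card ι : ℝ) / (Fintype.card ι - 1) ≤ sampleMargin w c h z) :
    z = w c := by
  have hk := sub_one_pos_of_nonempty_erase h
  have hle := hm.trans (sampleMargin_le_inner_smul_card_sub_sum w h z)
  rw [hS, sub_zero, real_inner_smul_left, div_le_div_iff_of_pos_right hk] at hle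
  have hone : ⟪w c, z⟫ = 1 := le_antisymm
    (by simpa [hwc, hz] using real_inner_le_norm (w c) z) (by nlinarith)
  exact ((inner_eq_one_iff_of_norm_eq_one hwc hz).mp hone).symm

lemma inner_eq_of_le_sampleMargin_self_of_sum_eq_zero {w : ι → E} {c : ι}
    {h : (univ.erase c).Nonempty} (hwc : ‖w c‖ = 1) (hS : ∑ j, w j = 0)
    (hm : (Fintype.card ι : ℝ) / (Fintype.card ι - 1) ≤ sampleMargin w c h (w c)) :
    ∀ j ≠ c, ⟪w j, w c⟫ = -1 / (Fintype.card ι - 1) := by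
  have hk := sub_one_pos_of_nonempty_erase h
  have hself : ⟪w c, w c⟫ = 1 := by rw [real_inner_self_eq_norm_sq, hwc, one_pow]
  have hsum : ∑ j ∈ univ.erase c, ⟪w j, w c⟫
      = ∑ _j ∈ univ.erase c, (-1 / (Fintype.card ι - 1) : ℝ) := by
    have := inner_smul_card_sub_sum w c (w c)
    rw [hS, sub_zero, real_inner_smul_left, hself] at this
    rw [sum_const, nsmul_eq_mul, cast_card_erase_univ]
    field_simp
    linarith
  have hsup : ((univ.erase c).sup' h fun j => ⟪w j, w c⟫) ≤ -1 / (Fintype.card ι - 1) := by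
    rw [sampleMargin, hself] at hm
    have : 1 - (Fintype.card ι : ℝ) / (Fintype.card ι - 1) = -1 / (Fintype.card ι - 1) := by
      field_simp
      ring
    linarith
  intro j hj
  exact (sum_eq_sum_iff_of_le fun i hi => (le_sup' (fun j => ⟪w j, w c⟫) hi).trans hsup).mp
    hsum j (mem_erase.mpr ⟨hj, mem_univ j⟩)

lemma sampleMargin_self_of_inner_eq {w : ι → E} {c : ι} (h : (univ.erase c).Nonempty)
    (hwc : ‖w c‖ = 1) (hinner : ∀ j ≠ c, ⟪w j, w c⟫ = -1 / (Fintype.card ι - 1)) :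
    sampleMargin w c h (w c) = Fintype.card ι / (Fintype.card ι - 1) := by
  have hk := sub_one_pos_of_nonempty_erase h
  have hsup : ((univ.erase c).sup' h fun j => ⟪w j, w c⟫) = -1 / (Fintype.card ι - 1) := by
    rw [sup'_congr h rfl fun j hj => hinner j (ne_of_mem_erase hj), sup'_const]
  rw [sampleMargin, hsup, real_inner_self_eq_norm_sq, hwc]
  field_simp
  ring

variable {α : Type*} [Fintype α] {w : ι → E} {z : α → E} {y : α → ι}

theorem inf'_sampleMargin_le (hα : (univ : Finset α).Nonempty) (hw : ∀ j, ‖w j‖ = 1)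
    (hz : ∀ a, ‖z a‖ = 1) (hy : Function.Surjective y) (hne : ∀ c : ι, (univ.erase c).Nonempty) :
    univ.inf' hα (fun a => sampleMargin w (y a) (hne (y a)) (z a))
      ≤ Fintype.card ι / (Fintype.card ι - 1) := by
  have : Nonempty ι := ⟨y hα.choose⟩
  obtain ⟨c, hc⟩ := exists_norm_smul_card_sub_sum_le hw
  obtain ⟨a, rfl⟩ := hy c
  calc _ ≤ sampleMargin w (y a) (hne (y a)) (z a) := inf'_le _ (mem_univ a)
    _ ≤ _ := sampleMargin_le_norm_smul_card_sub_sum w (hne (y a)) (hz a)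
    _ ≤ _ := by
      have := sub_one_pos_of_nonempty_erase (hne (y a))
      gcongr

theorem inf'_sampleMargin_eq_iff (hα : (univ : Finset α).Nonempty) (hw : ∀ j, ‖w j‖ = 1)
    (hz : ∀ a, ‖z a‖ = 1) (hy : Function.Surjective y) (hne : ∀ c : ι, (univ.erase c).Nonempty) :
    univ.inf' hα (fun a => sampleMargin w (y a) (hne (y a)) (z a))
        = Fintype.card ι / (Fintype.card ι - 1) ↔
      (∀ i j, i ≠ j → ⟪w i, w j⟫ = -1 / (Fintype.card ι - 1)) ∧ ∀ a, z a = w (y a) := by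
  have : Nonempty ι := ⟨y hα.choose⟩
  refine ⟨fun heq => ?_, fun ⟨hsimplex, hzw⟩ => ?_⟩
  · have hge (a : α) : (Fintype.card ι : ℝ) / (Fintype.card ι - 1)
        ≤ sampleMargin w (y a) (hne (y a)) (z a) := heq ▸ inf'_le _ (mem_univ a)
    have hS : ∑ j, w j = 0 := sum_eq_zero_of_card_le_norm_smul_card_sub_sum hw fun c => by
      obtain ⟨a, rfl⟩ := hy c
      rw [← div_le_div_iff_of_pos_right (sub_one_pos_of_nonempty_erase (hne (y a)))]
      exact (hge a).trans (sampleMargin_le_norm_smul_card_sub_sum w (hne (y a)) (hz a))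
    have hzw (a : α) : z a = w (y a) :=
      eq_of_le_sampleMargin_of_sum_eq_zero (hw _) (hz a) hS (hge a)
    refine ⟨fun i j hij => ?_, hzw⟩
    obtain ⟨a, rfl⟩ := hy j
    exact inner_eq_of_le_sampleMargin_self_of_sum_eq_zero (hw _) hS (hzw a ▸ hge a) i hij
  · refine le_antisymm (inf'_sampleMargin_le hα hw hz hy hne) (le_inf' _ _ fun a _ => ?_)
    rw [hzw a, sampleMargin_self_of_inner_eq (hne (y a)) (hw _) fun j hj => hsimplex j (y a) hj]

end Margin

theorem stmt15_general {d k N : ℕ}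
    (w : Fin k → EuclideanSpace ℝ (Fin d))
    (z : Fin N → EuclideanSpace ℝ (Fin d))
    (y : Fin N → Fin k)
    (hw : ∀ j, ‖w j‖ = 1) (hz : ∀ i, ‖z i‖ = 1)
    (hy : Function.Surjective y)
    (hNU : (Finset.univ : Finset (Fin N)).Nonempty)
    (hne : ∀ j : Fin k, (Finset.univ.erase j).Nonempty) :
    (Finset.univ.inf' hNU (fun i =>
        ⟪w (y i), z i⟫ -
          (Finset.univ.erase (y i)).sup' (hne (y i)) (fun j => ⟪w j, z i⟫))
      ≤ (k : ℝ) / ((k : ℝ) - 1)) ∧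
    ((Finset.univ.inf' hNU (fun i =>
        ⟪w (y i), z i⟫ -
          (Finset.univ.erase (y i)).sup' (hne (y i)) (fun j => ⟪w j, z i⟫))
      = (k : ℝ) / ((k : ℝ) - 1)) ↔
      ((∀ i j : Fin k, i ≠ j → ⟪w i, w j⟫ = -1 / ((k : ℝ) - 1)) ∧
        ∀ i : Fin N, z i = w (y i))) := by
  have hcard : (Fintype.card (Fin k) : ℝ) = k := by rw [Fintype.card_fin]
  have hle := inf'_sampleMargin_le hNU hw hz hy hne
  have heq_iff := inf'_sampleMargin_eq_iff hNU hw hz hy hne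
  rw [hcard] at hle heq_iff
  exact ⟨hle, heq_iff⟩

theorem stmt15 {d k N : ℕ} (hd : 2 ≤ d) (hk : 2 ≤ k) (hkd : k ≤ d + 1)
    (w : Fin k → EuclideanSpace ℝ (Fin d))
    (z : Fin N → EuclideanSpace ℝ (Fin d))
    (y : Fin N → Fin k)
    (hw : ∀ j, ‖w j‖ = 1) (hz : ∀ i, ‖z i‖ = 1)
    (hy : Function.Surjective y)
    (hNU : (Finset.univ : Finset (Fin N)).Nonempty)
    (hne : ∀ j : Fin k, (Finset.univ.erase j).Nonempty) :
    (Finset.univ.inf' hNU (fun i =>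
        ⟪w (y i), z i⟫ -
          (Finset.univ.erase (y i)).sup' (hne (y i)) (fun j => ⟪w j, z i⟫))
      ≤ (k : ℝ) / ((k : ℝ) - 1)) ∧
    ((Finset.univ.inf' hNU (fun i =>
        ⟪w (y i), z i⟫ -
          (Finset.univ.erase (y i)).sup' (hne (y i)) (fun j => ⟪w j, z i⟫))
      = (k : ℝ) / ((k : ℝ) - 1)) ↔
      ((∀ i j : Fin k, i ≠ j → ⟪w i, w j⟫ = -1 / ((k : ℝ) - 1)) ∧
        ∀ i : Fin N, z i = w (y i))) :=
  stmt15_general w z y hw hz hy hNU hne
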